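/- Fix k ≥ 1 and d : Fin k → ℕ, and let V = Π_{i : Fin k} (Fin (d i) → ℝ), equipped with the weighted scaling action of ℝ given by (h_t y) i = t^{i+1} · (y i) (so the coordinates in the i-th block have weight i+1). Let w ∈ ℕ and let f : V → ℝ be a smooth (C^∞) function that is homogeneous of weight w, i.e. f (h_t y) = t^w · f y for all t ∈ ℝ and y ∈ V. Then f is a polynomial function: there exists a multivariate polynomial P over ℝ in the coordinates of V, weighted homogeneous of degree w with respect to the weight assignment giving each coordinate in the i-th block the weight i+1, such that f y = eval y P for all y ∈ V. -/

import Mathlib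

open MvPolynomial Filter

namespace StatementTen

variable {k : ℕ} {d : Fin k → ℕ}

/-- The index set of coordinates. -/
abbrev Idx (k : ℕ) (d : Fin k → ℕ) := Σ i : Fin k, Fin (d i)

/-- The model graded space. -/
abbrev Vs (k : ℕ) (d : Fin k → ℕ) := ∀ i : Fin k, Fin (d i) → ℝ

/-- Standard basis vectors. -/
noncomputable def ev (v : Idx k d) : Vs k d := Pi.single v.1 (Pi.single v.2 1)

lemma sum_smul_ev (c : Idx k d → ℝ) (i : Fin k) (j : Fin (d i)) :
    (∑ v, c v • ev v) i j = c ⟨i, j⟩ := by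
  classical
  rw [Finset.sum_apply, Finset.sum_apply]
  rw [Finset.sum_eq_single (⟨i, j⟩ : Idx k d)]
  · simp [ev]
  · rintro ⟨a, b⟩ - hne
    by_cases hai : a = i
    · subst hai
      have hbj : b ≠ j := by rintro rfl; exact hne rfl
      simp only [ev, Pi.single_eq_same, Pi.smul_apply, smul_eq_mul]
      rw [Pi.single_eq_of_ne (Ne.symm hbj)]
      ring
    · simp only [ev, Pi.smul_apply, smul_eq_mul]
      rw [Pi.single_eq_of_ne (fun h => hai h.symm)]
      simp
  · intro h; exact absurd (Finset.mem_univ _) h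

lemma eq_sum_smul_ev (x : Vs k d) : x = ∑ v, x v.1 v.2 • ev v := by
  funext i j
  rw [sum_smul_ev]

lemma clm_apply_eq_sum (L : Vs k d →L[ℝ] ℝ) (x : Vs k d) :
    L x = ∑ v, x v.1 v.2 * L (ev v) := by
  conv_lhs => rw [eq_sum_smul_ev x]
  rw [map_sum]
  simp [smul_eq_mul]

/-- Partial derivative in direction of basis vector `v`. -/
noncomputable def Dv (v : Idx k d) (f : Vs k d → ℝ) : Vs k d → ℝ :=
  fun y => fderiv ℝ f y (ev v)

lemma contDiff_Dv {f : Vs k d → ℝ} (hf : ContDiff ℝ (⊤ : ℕ∞) f) (v : Idx k d) :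
    ContDiff ℝ (⊤ : ℕ∞) (Dv v f) :=
  (hf.fderiv_right (by simp)).clm_apply contDiff_const

/-- The recursive condition "all partial derivatives of order `n+1` vanish". -/
def VC : ℕ → (Vs k d → ℝ) → Prop
  | 0, f => ∀ v, Dv v f = 0
  | n + 1, f => ∀ v, VC n (Dv v f)

/-- The "integral along the ray" transform on polynomials. -/
noncomputable def rayInt (Q : MvPolynomial (Idx k d) ℝ) : MvPolynomial (Idx k d) ℝ :=
  ∑ α ∈ Q.support, monomial α (Q.coeff α / ((α.degree : ℝ) + 1))

lemma eval_ray_eq (Q : MvPolynomial (Idx k d) ℝ) (z : Idx k d → ℝ) (s : ℝ) :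
    eval (fun v => s * z v) Q
      = ∑ α ∈ Q.support, (Q.coeff α * ∏ v ∈ α.support, (z v) ^ (α v)) * s ^ α.degree := by
  rw [eval_eq]
  refine Finset.sum_congr rfl fun α _ => ?_
  have : ∏ v ∈ α.support, (s * z v) ^ α v
      = (∏ v ∈ α.support, s ^ α v) * ∏ v ∈ α.support, (z v) ^ α v := by
    rw [← Finset.prod_mul_distrib]
    exact Finset.prod_congr rfl fun v _ => mul_pow _ _ _
  rw [this, Finset.prod_pow_eq_pow_sum]
  rw [Finsupp.degree_apply]
  ring

lemma continuous_eval_ray (Q : MvPolynomial (Idx k d) ℝ) (z : Idx k d → ℝ) :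
    Continuous (fun s : ℝ => eval (fun v => s * z v) Q) := by
  have : (fun s : ℝ => eval (fun v => s * z v) Q)
      = fun s => ∑ α ∈ Q.support, (Q.coeff α * ∏ v ∈ α.support, (z v) ^ (α v)) * s ^ α.degree :=
    funext fun s => by exact eval_ray_eq Q z s
  rw [this]
  exact continuous_finset_sum _ fun α _ => (continuous_const.mul (continuous_pow _))

lemma integral_ray (Q : MvPolynomial (Idx k d) ℝ) (z : Idx k d → ℝ) :
    (∫ s in (0:ℝ)..1, eval (fun v => s * z v) Q) = eval z (rayInt Q) := by
  rw [intervalIntegral.integral_congr (g := fun s =>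
      ∑ α ∈ Q.support, (Q.coeff α * ∏ v ∈ α.support, (z v) ^ (α v)) * s ^ α.degree)
    (fun s _ => eval_ray_eq Q z s)]
  rw [intervalIntegral.integral_finset_sum]
  · rw [rayInt, map_sum]
    refine Finset.sum_congr rfl fun α _ => ?_
    rw [intervalIntegral.integral_const_mul, integral_pow, eval_monomial]
    have h1 : ((α.degree : ℝ) + 1) ≠ 0 := by positivity
    have : (α.prod fun v e => z v ^ e) = ∏ v ∈ α.support, (z v) ^ α v := rfl
    rw [this]
    field_simp
    simp
  · intro α _
    exact (continuous_const.mul (continuous_pow _)).intervalIntegrable _ _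

/-- A smooth function whose partial derivatives of order `n+1` all vanish is polynomial. -/
lemma isPoly_of_VC :
    ∀ (n : ℕ) (f : Vs k d → ℝ), ContDiff ℝ (⊤ : ℕ∞) f → VC n f →
      ∃ P : MvPolynomial (Idx k d) ℝ, ∀ y, f y = eval (fun v => y v.1 v.2) P := by
  intro n
  induction n with
  | zero =>
    intro f hf h0
    have hd : ∀ y : Vs k d, fderiv ℝ f y = 0 := by
      intro y
      ext x
      rw [clm_apply_eq_sum]
      have : ∀ v : Idx k d, fderiv ℝ f y (ev v) = 0 := fun v => congrFun (h0 v) y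
      simp [this]
    have hc := is_const_of_fderiv_eq_zero (hf.differentiable (by simp)) hd
    exact ⟨C (f 0), fun y => by rw [eval_C]; exact hc y 0⟩
  | succ n ih =>
    intro f hf h
    choose Q hQ using fun v => ih (Dv v f) (contDiff_Dv hf v) (h v)
    refine ⟨C (f 0) + ∑ v, X v * rayInt (Q v), fun y => ?_⟩
    set z : Idx k d → ℝ := fun v => y v.1 v.2 with hz
    -- FTC along the segment from 0 to y
    have hderiv : ∀ s ∈ Set.uIcc (0:ℝ) 1,
        HasDerivAt (fun t : ℝ => f (t • y)) (fderiv ℝ f (s • y) y) s := by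
      intro s _
      have h1 : HasDerivAt (fun t : ℝ => t • y) y s := by
        simpa using (hasDerivAt_id s).smul_const y
      exact ((hf.differentiable (by simp) (s • y)).hasFDerivAt).comp_hasDerivAt s h1
    have hcont : Continuous fun s : ℝ => fderiv ℝ f (s • y) y := by
      have : Continuous fun s : ℝ => fderiv ℝ f (s • y) :=
        (hf.continuous_fderiv (by simp)).comp (continuous_id.smul continuous_const)
      exact this.clm_apply continuous_const
    have hFTC := intervalIntegral.integral_eq_sub_of_hasDerivAt hderiv
      (hcont.intervalIntegrable 0 1)
    simp only [one_smul, zero_smul] at hFTC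
    -- rewrite the integrand
    have hint : ∀ s : ℝ, fderiv ℝ f (s • y) y
        = ∑ v, z v * eval (fun u => s * z u) (Q v) := by
      intro s
      rw [clm_apply_eq_sum]
      refine Finset.sum_congr rfl fun v _ => ?_
      have : fderiv ℝ f (s • y) (ev v) = Dv v f (s • y) := rfl
      rw [this, hQ v (s • y)]
      congr 1
    have hswap : (∫ s in (0:ℝ)..1, fderiv ℝ f (s • y) y)
        = ∑ v, z v * eval z (rayInt (Q v)) := by
      rw [intervalIntegral.integral_congr (g := fun s =>
          ∑ v, z v * eval (fun u => s * z u) (Q v)) (fun s _ => hint s)]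
      rw [intervalIntegral.integral_finset_sum]
      · exact Finset.sum_congr rfl fun v _ => by
          rw [intervalIntegral.integral_const_mul, integral_ray]
      · intro v _
        exact (continuous_const.mul (continuous_eval_ray (Q v) z)).intervalIntegrable _ _
    have : f y = f 0 + ∑ v, z v * eval z (rayInt (Q v)) := by
      rw [← hswap, hFTC]; ring
    rw [this]
    simp [eval_add, eval_C, map_sum, eval_mul, eval_X]

/-- Generalized homogeneity. -/
def Hom (a b : ℕ) (g : Vs k d → ℝ) : Prop :=
  ∀ (t : ℝ) (y : Vs k d), t ^ a * g (fun i => t ^ ((i : ℕ) + 1) • y i) = t ^ b * g y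

/-- Weighted scaling as a continuous linear map. -/
noncomputable def Lt (t : ℝ) : Vs k d →L[ℝ] Vs k d :=
  ContinuousLinearMap.pi (fun i => t ^ ((i : ℕ) + 1) • ContinuousLinearMap.proj i)

lemma Lt_apply (t : ℝ) (y : Vs k d) : Lt t y = fun i : Fin k => t ^ ((i : ℕ) + 1) • y i := rfl

lemma Lt_ev (t : ℝ) (v : Idx k d) : Lt t (ev v) = t ^ ((v.1 : ℕ) + 1) • ev v := by
  obtain ⟨a, b⟩ := v
  funext i
  by_cases h : i = a
  · subst h
    simp [Lt_apply, ev, Pi.single_eq_same]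
  · simp [Lt_apply, ev, Pi.single_eq_of_ne h]

lemma Hom.derivStep {a b : ℕ} {g : Vs k d → ℝ} (hg : Differentiable ℝ g)
    (hgH : Hom a b g) (v : Idx k d) :
    Hom (a + ((v.1 : ℕ) + 1)) b (Dv v g) := by
  intro t y
  have hfun : (fun y : Vs k d => t ^ a * g (Lt t y)) = fun y => t ^ b * g y := by
    funext x
    rw [Lt_apply]
    exact hgH t x
  have hF : HasFDerivAt (fun y : Vs k d => t ^ a * g (Lt t y))
      ((t ^ a) • ((fderiv ℝ g (Lt t y)).comp (Lt t))) y :=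
    (((hg (Lt t y)).hasFDerivAt.comp y (Lt t).hasFDerivAt)).const_mul (t ^ a)
  have hG : HasFDerivAt (fun y : Vs k d => t ^ b * g y) ((t ^ b) • fderiv ℝ g y) y :=
    (hg y).hasFDerivAt.const_mul _
  rw [hfun] at hF
  have heq := hF.unique hG
  have happ := congrArg (fun L : Vs k d →L[ℝ] ℝ => L (ev v)) heq
  simp only [ContinuousLinearMap.coe_smul', Pi.smul_apply, ContinuousLinearMap.coe_comp',
    Function.comp_apply, Lt_ev, map_smul, smul_eq_mul] at happ
  show t ^ (a + ((v.1:ℕ)+1)) * Dv v g (fun i => t ^ ((i : ℕ) + 1) • y i) = t ^ b * Dv v g y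
  have hky : (fun i : Fin k => t ^ ((i : ℕ) + 1) • y i) = Lt t y := (Lt_apply t y).symm
  rw [hky, pow_add]
  unfold Dv
  rw [mul_assoc]
  exact happ

lemma Hom.eq_zero {a b : ℕ} {g : Vs k d → ℝ} (hg : Continuous g)
    (h : Hom a b g) (hab : b < a) : g = 0 := by
  funext y
  have hφc : Continuous fun t : ℝ => t ^ (a - b) * g (fun i => t ^ ((i : ℕ) + 1) • y i) := by
    refine (continuous_pow _).mul (hg.comp ?_)
    exact continuous_pi fun i => (continuous_pow _).smul continuous_const
  have h1 : ∀ t : ℝ, t ≠ 0 →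
      t ^ (a - b) * g (fun i => t ^ ((i : ℕ) + 1) • y i) = g y := by
    intro t ht
    have hb : t ^ b ≠ 0 := pow_ne_zero _ ht
    apply mul_left_cancel₀ hb
    calc t ^ b * (t ^ (a - b) * g (fun i => t ^ ((i : ℕ) + 1) • y i))
        = t ^ (b + (a - b)) * g (fun i => t ^ ((i : ℕ) + 1) • y i) := by
          rw [pow_add]; ring
      _ = t ^ a * g (fun i => t ^ ((i : ℕ) + 1) • y i) := by
          rw [Nat.add_sub_cancel' hab.le]
      _ = t ^ b * g y := h t y
  have h2 : (0:ℝ) ^ (a - b) * g (fun i => (0:ℝ) ^ ((i : ℕ) + 1) • y i) = 0 := by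
    rw [zero_pow (Nat.sub_ne_zero_of_lt hab)]
    ring
  have h3 : Tendsto (fun t : ℝ => t ^ (a - b) * g (fun i => t ^ ((i : ℕ) + 1) • y i))
      (nhdsWithin 0 {(0:ℝ)}ᶜ)
      (nhds ((0:ℝ) ^ (a - b) * g (fun i => (0:ℝ) ^ ((i : ℕ) + 1) • y i))) :=
    (hφc.tendsto 0).mono_left nhdsWithin_le_nhds
  have h4 : Tendsto (fun t : ℝ => t ^ (a - b) * g (fun i => t ^ ((i : ℕ) + 1) • y i))
      (nhdsWithin 0 {(0:ℝ)}ᶜ) (nhds (g y)) := by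
    refine Tendsto.congr' ?_ tendsto_const_nhds
    filter_upwards [self_mem_nhdsWithin] with t ht
    exact (h1 t ht).symm
  have h5 := tendsto_nhds_unique h4 h3
  simpa [zero_pow (Nat.sub_ne_zero_of_lt hab)] using h5

lemma VC_of_Hom :
    ∀ (n a b : ℕ) (g : Vs k d → ℝ), ContDiff ℝ (⊤ : ℕ∞) g → Hom a b g → b ≤ a + n → VC n g := by
  intro n
  induction n with
  | zero =>
    intro a b g hg hH hab v
    refine Hom.eq_zero (contDiff_Dv hg v).continuous
      (hH.derivStep (hg.differentiable (by simp)) v) ?_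
    omega
  | succ n ih =>
    intro a b g hg hH hab v
    exact ih (a + ((v.1 : ℕ) + 1)) b (Dv v g) (contDiff_Dv hg v)
      (hH.derivStep (hg.differentiable (by simp)) v) (by omega)

end StatementTen

open StatementTen MvPolynomial

/-- Fix `k ≥ 1` and `d : Fin k → ℕ`, and let
`V = Π_{i : Fin k} (Fin (d i) → ℝ)`, with the weighted scaling action of `ℝ` given by
`(h_t y) i = t^(i+1) • (y i)` (the coordinates of the `i`-th block have weight `i+1`).
If `f : V → ℝ` is a smooth function which is homogeneous of weight `w`, i.e.
`f (h_t y) = t^w * f y` for all `t` and `y`, then `f` is a polynomial function: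
there is a multivariate polynomial `P` in the coordinates of `V`, weighted homogeneous
of degree `w` for the weights assigning weight `i+1` to the coordinates in the `i`-th
block, with `f y = eval y P` for all `y`. -/
theorem homogeneous_smooth_function_is_weighted_polynomial
    (k : ℕ) (hk : 1 ≤ k) (d : Fin k → ℕ) (w : ℕ)
    (f : (∀ i : Fin k, Fin (d i) → ℝ) → ℝ)
    (hf : ContDiff ℝ (⊤ : ℕ∞) f)
    (hhom : ∀ (t : ℝ) (y : ∀ i : Fin k, Fin (d i) → ℝ),
      f (fun i => t ^ ((i : ℕ) + 1) • y i) = t ^ w * f y) :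
    ∃ P : MvPolynomial (Σ i : Fin k, Fin (d i)) ℝ,
      P.IsWeightedHomogeneous (fun v => (v.1 : ℕ) + 1) w ∧
      ∀ y : ∀ i : Fin k, Fin (d i) → ℝ,
        f y = MvPolynomial.eval (fun v : Σ i : Fin k, Fin (d i) => y v.1 v.2) P := by
  classical
  set wfun : Idx k d → ℕ := fun v => (v.1 : ℕ) + 1 with hwfun
  -- f satisfies generalized homogeneity Hom 0 w
  have hH : Hom 0 w f := by
    intro t y
    simpa using hhom t y
  -- hence all partial derivatives of order w+1 vanish
  have hvc : VC w f := VC_of_Hom w 0 w f hf hH (by omega)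
  -- hence f is a polynomial function
  obtain ⟨P₀, hP₀⟩ := isPoly_of_VC w f hf hvc
  -- extract weighted homogeneous component of degree w
  refine ⟨weightedHomogeneousComponent wfun w P₀,
    weightedHomogeneousComponent_isWeightedHomogeneous w P₀, ?_⟩
  intro y
  set z : Idx k d → ℝ := fun v => y v.1 v.2 with hz
  -- the one-variable polynomial recording the scaling behaviour
  set q : Polynomial ℝ := ∑ α ∈ P₀.support,
    Polynomial.C (P₀.coeff α * ∏ v ∈ α.support, (z v) ^ (α v)) *
      Polynomial.X ^ (Finsupp.weight wfun α) with hq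
  have hqeval : ∀ t : ℝ, q.eval t = f (fun i => t ^ ((i : ℕ) + 1) • y i) := by
    intro t
    rw [hP₀ (fun i => t ^ ((i : ℕ) + 1) • y i)]
    have hco : (fun v : Idx k d => (fun i : Fin k => t ^ ((i : ℕ) + 1) • y i) v.1 v.2)
        = fun v => t ^ wfun v * z v := by
      funext v
      simp [hwfun, hz, mul_comm]
    rw [hco, eval_eq, hq, Polynomial.eval_finset_sum]
    refine Finset.sum_congr rfl fun α _ => ?_
    simp only [Polynomial.eval_mul, Polynomial.eval_C, Polynomial.eval_pow, Polynomial.eval_X]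
    have hprod : ∏ v ∈ α.support, (t ^ wfun v * z v) ^ α v
        = (∏ v ∈ α.support, t ^ (α v * wfun v)) * ∏ v ∈ α.support, (z v) ^ α v := by
      rw [← Finset.prod_mul_distrib]
      refine Finset.prod_congr rfl fun v _ => ?_
      rw [mul_pow, ← pow_mul, mul_comm (wfun v) (α v)]
    have hw : (Finsupp.weight wfun α : ℕ) = ∑ v ∈ α.support, α v * wfun v := by
      rw [Finsupp.weight_apply, Finsupp.sum]
      simp [smul_eq_mul]
    rw [hprod, Finset.prod_pow_eq_pow_sum, ← hw]
    ring
  -- q is forced to equal (f y) * X^w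
  have hqX : q = Polynomial.C (f y) * Polynomial.X ^ w := by
    apply Polynomial.funext
    intro t
    rw [hqeval, hhom t y, Polynomial.eval_mul, Polynomial.eval_C, Polynomial.eval_pow,
      Polynomial.eval_X]
    ring
  -- compare coefficients at degree w
  have hcoeff : q.coeff w = f y := by
    rw [hqX]
    simp
  rw [← hcoeff, hq]
  rw [Polynomial.finset_sum_coeff]
  rw [weightedHomogeneousComponent_apply, map_sum]
  rw [Finset.sum_filter]
  refine (Finset.sum_congr rfl fun α _ => ?_).symm
  rw [Polynomial.coeff_C_mul, Polynomial.coeff_X_pow]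
  by_cases hα : Finsupp.weight wfun α = w
  · rw [if_pos hα, if_pos hα.symm, eval_monomial]
    simp [Finsupp.prod]
  · rw [if_neg hα, if_neg fun h => hα h.symm]
    ring
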